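/- For any symmetric bilinear form ψ on ℂ^k, there exists a unit vector α such that |ψ(α,α)| equals the maximum of |ψ(u,v)| over all pairs of unit vectors u,v. -/

import Mathlib

/-! Maximise `‖ψ w w‖` over the (compact) unit sphere at some `α`. By homogeneity
`‖ψ w w‖ ≤ ‖ψ α α‖ ‖w‖²` for every `w`, and the polarization identity
`4 ψ u v = ψ (u + v) (u + v) - ψ (u - v) (u - v)` together with the parallelogram law
gives `‖ψ u v‖ ≤ ‖ψ α α‖` for unit `u`, `v`. -/

namespace LinearMap

variable {𝕜 E : Type*} [RCLike 𝕜]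

section Normed

variable [NormedAddCommGroup E] [NormedSpace 𝕜 E]

theorem continuous_apply_self [FiniteDimensional 𝕜 E] (ψ : E →ₗ[𝕜] E →ₗ[𝕜] 𝕜) :
    Continuous fun u : E => ψ u u :=
  let ψc : E →ₗ[𝕜] E →L[𝕜] 𝕜 :=
    (LinearMap.toContinuousLinearMap : (E →ₗ[𝕜] 𝕜) ≃ₗ[𝕜] E →L[𝕜] 𝕜).toLinearMap ∘ₗ ψ
  ψc.continuous_of_finiteDimensional.clm_apply continuous_id

theorem norm_apply_self_le_of_norm_eq_one {ψ : E →ₗ[𝕜] E →ₗ[𝕜] 𝕜} {M : ℝ}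
    (hM : ∀ w : E, ‖w‖ = 1 → ‖ψ w w‖ ≤ M) (w : E) : ‖ψ w w‖ ≤ M * ‖w‖ ^ 2 := by
  rcases eq_or_ne w 0 with rfl | hw
  · simp
  have hnw : (‖w‖ : 𝕜) ≠ 0 := by exact_mod_cast norm_ne_zero_iff.mpr hw
  set w₁ : E := (‖w‖ : 𝕜)⁻¹ • w
  have hw₁ : ‖w₁‖ = 1 := norm_smul_inv_norm hw
  have hscale : ψ w w = (‖w‖ : 𝕜) ^ 2 * ψ w₁ w₁ := by
    simp only [w₁, map_smul, LinearMap.smul_apply, smul_eq_mul]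
    field_simp
  rw [hscale, norm_mul, norm_pow, RCLike.norm_ofReal, abs_norm, mul_comm]
  exact mul_le_mul_of_nonneg_right (hM w₁ hw₁) (by positivity)

end Normed

section InnerProduct

variable [NormedAddCommGroup E] [InnerProductSpace 𝕜 E]

theorem norm_apply_le_of_norm_apply_self_le {ψ : E →ₗ[𝕜] E →ₗ[𝕜] 𝕜}
    (hsymm : ∀ u v, ψ u v = ψ v u) {M : ℝ} (hM : ∀ w : E, ‖ψ w w‖ ≤ M * ‖w‖ ^ 2) (u v : E) :
    ‖ψ u v‖ ≤ M * (‖u‖ ^ 2 + ‖v‖ ^ 2) / 2 := by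
  have polarization : (4 : 𝕜) * ψ u v = ψ (u + v) (u + v) - ψ (u - v) (u - v) := by
    simp only [map_add, map_sub, LinearMap.add_apply, LinearMap.sub_apply, hsymm v u]
    ring
  have parallelogram : ‖u + v‖ ^ 2 + ‖u - v‖ ^ 2 = 2 * (‖u‖ ^ 2 + ‖v‖ ^ 2) := by
    simpa only [sq] using parallelogram_law_with_norm 𝕜 u v
  have h4 : 4 * ‖ψ u v‖ ≤ 2 * (M * (‖u‖ ^ 2 + ‖v‖ ^ 2)) :=
    calc 4 * ‖ψ u v‖ = ‖(4 : 𝕜) * ψ u v‖ := by rw [norm_mul, RCLike.norm_ofNat]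
      _ = ‖ψ (u + v) (u + v) - ψ (u - v) (u - v)‖ := by rw [polarization]
      _ ≤ ‖ψ (u + v) (u + v)‖ + ‖ψ (u - v) (u - v)‖ := norm_sub_le _ _
      _ ≤ M * ‖u + v‖ ^ 2 + M * ‖u - v‖ ^ 2 := add_le_add (hM _) (hM _)
      _ = 2 * (M * (‖u‖ ^ 2 + ‖v‖ ^ 2)) := by rw [← mul_add, parallelogram]; ring
  linarith

end InnerProduct

end LinearMap

theorem stmt_0 (k : ℕ) (hk : 0 < k)
    (ψ : EuclideanSpace ℂ (Fin k) →ₗ[ℂ] EuclideanSpace ℂ (Fin k) →ₗ[ℂ] ℂ)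
    (hsymm : ∀ u v, ψ u v = ψ v u) :
    ∃ α : EuclideanSpace ℂ (Fin k), ‖α‖ = 1 ∧
      IsGreatest {x : ℝ | ∃ u v : EuclideanSpace ℂ (Fin k),
        ‖u‖ = 1 ∧ ‖v‖ = 1 ∧ x = ‖ψ u v‖} ‖ψ α α‖ := by
  have : Nonempty (Fin k) := Fin.pos_iff_nonempty.mp hk
  obtain ⟨α, hα, hmax⟩ := (isCompact_sphere (0 : EuclideanSpace ℂ (Fin k)) 1).exists_isMaxOn
    (NormedSpace.sphere_nonempty.mpr zero_le_one) (ψ.continuous_apply_self.norm.continuousOn)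
  rw [mem_sphere_zero_iff_norm] at hα
  have hdiag := LinearMap.norm_apply_self_le_of_norm_eq_one (ψ := ψ) (M := ‖ψ α α‖)
    fun w hw => hmax (mem_sphere_zero_iff_norm.mpr hw)
  refine ⟨α, hα, ⟨α, α, hα, hα, rfl⟩, ?_⟩
  rintro _ ⟨u, v, hu, hv, rfl⟩
  simpa [hu, hv, one_add_one_eq_two] using LinearMap.norm_apply_le_of_norm_apply_self_le hsymm hdiag u v
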